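/- arXiv:math/0612467 — 2 statements merged into one kernel-verified Lean document; each statement's English description precedes it below -/
import Mathlib

section
/- Let a ≤ b be reals, α : Fin n → ℝ with a ≤ αᵢ ≤ b for all i, and let Z₁ : ℝⁿ → ℝⁿ be continuous satisfying, for some integer m ≥ 1 and constants c₀′, c₀″ > 0: ‖Z₁(x)‖ ≤ c₀′‖x‖^{1+m} for all x with ‖x‖ ≤ 1, and ‖Z₁(x)‖ ≤ c₀″‖x‖ for all x with ‖x‖ ≥ 1. Set c₀ = max(c₀′, c₀″), a₀ = a − c₀, b₀ = b + c₀. Let Y₁(x)ᵢ = αᵢ xᵢ + Z₁(x)ᵢ and let ψ be a flow of Y₁ defined for all t ∈ ℝ. Then for all x ∈ ℝⁿ and all t ≥ 0: ‖x‖e^{a₀ t} ≤ ‖ψ t x‖ ≤ ‖x‖e^{b₀ t}, and ‖x‖e^{−b₀ t} ≤ ‖ψ (−t) x‖ ≤ ‖x‖e^{−a₀ t}. -/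
/-!
The linear part of `Y₁` contributes between `a‖y‖²` and `b‖y‖²` to `⟪y, Y₁ y⟫`, and the two growth
bounds on `Z₁` combine to `‖Z₁ y‖ ≤ c₀‖y‖` everywhere, so `a₀‖y‖² ≤ ⟪y, Y₁ y⟫ ≤ b₀‖y‖²`.
Along a trajectory `γ` we have `(‖γ‖²)' = 2⟪γ, γ'⟫`, hence `‖γ s‖ e^{-cs}` is nondecreasing for
`c = a₀` and nonincreasing for `c = b₀`; comparing times `0`, `t` and `-t` gives the four estimates.
-/

open Real RealInnerProductSpace

theorem norm_le_max_mul_norm {E F : Type*} [SeminormedAddCommGroup E] [SeminormedAddCommGroup F]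
    {f : E → F} {C₁ C₂ : ℝ} {k : ℕ} (hC₁ : 0 ≤ C₁)
    (h₁ : ∀ x, ‖x‖ ≤ 1 → ‖f x‖ ≤ C₁ * ‖x‖ ^ (1 + k)) (h₂ : ∀ x, 1 ≤ ‖x‖ → ‖f x‖ ≤ C₂ * ‖x‖)
    (x : E) : ‖f x‖ ≤ max C₁ C₂ * ‖x‖ := by
  rcases le_total ‖x‖ 1 with hx | hx
  · calc ‖f x‖ ≤ C₁ * ‖x‖ ^ (1 + k) := h₁ x hx
      _ ≤ C₁ * ‖x‖ := by gcongr; exact pow_le_of_le_one (norm_nonneg x) hx (by omega)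
      _ ≤ max C₁ C₂ * ‖x‖ := by gcongr; exact le_max_left _ _
  · calc ‖f x‖ ≤ C₂ * ‖x‖ := h₂ x hx
      _ ≤ max C₁ C₂ * ‖x‖ := by gcongr; exact le_max_right _ _

section
variable {ι : Type*} [Fintype ι] {α : ι → ℝ}

theorem EuclideanSpace.inner_eq_sum_mul_sq_add_inner {y z w : EuclideanSpace ℝ ι}
    (hw : ∀ i, w i = α i * y i + z i) : ⟪y, w⟫ = ∑ i, α i * y i ^ 2 + ⟪y, z⟫ := by
  simp only [PiLp.inner_apply, RCLike.inner_apply, conj_trivial, hw, ← Finset.sum_add_distrib]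
  exact Finset.sum_congr rfl fun i _ => by ring

theorem EuclideanSpace.sum_mul_sq_le {b : ℝ} (hα : ∀ i, α i ≤ b) (y : EuclideanSpace ℝ ι) :
    ∑ i, α i * y i ^ 2 ≤ b * ‖y‖ ^ 2 := by
  rw [EuclideanSpace.real_norm_sq_eq, Finset.mul_sum]
  exact Finset.sum_le_sum fun i _ => mul_le_mul_of_nonneg_right (hα i) (sq_nonneg _)

theorem EuclideanSpace.le_sum_mul_sq {a : ℝ} (hα : ∀ i, a ≤ α i) (y : EuclideanSpace ℝ ι) :
    a * ‖y‖ ^ 2 ≤ ∑ i, α i * y i ^ 2 := by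
  rw [EuclideanSpace.real_norm_sq_eq, Finset.mul_sum]
  exact Finset.sum_le_sum fun i _ => mul_le_mul_of_nonneg_right (hα i) (sq_nonneg _)

theorem EuclideanSpace.inner_bounds_of_diagonal_add {a b c : ℝ} (hα : ∀ i, a ≤ α i ∧ α i ≤ b)
    {y z w : EuclideanSpace ℝ ι} (hw : ∀ i, w i = α i * y i + z i) (hz : ‖z‖ ≤ c * ‖y‖) :
    (a - c) * ‖y‖ ^ 2 ≤ ⟪y, w⟫ ∧ ⟪y, w⟫ ≤ (b + c) * ‖y‖ ^ 2 := by
  have hyz : |⟪y, z⟫| ≤ c * ‖y‖ ^ 2 :=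
    calc |⟪y, z⟫| ≤ ‖y‖ * ‖z‖ := abs_real_inner_le_norm y z
      _ ≤ ‖y‖ * (c * ‖y‖) := mul_le_mul_of_nonneg_left hz (norm_nonneg y)
      _ = c * ‖y‖ ^ 2 := by ring
  have hlow := le_sum_mul_sq (fun i => (hα i).1) y
  have hupp := sum_mul_sq_le (fun i => (hα i).2) y
  rw [inner_eq_sum_mul_sq_add_inner hw]
  constructor <;> linarith [abs_le.1 hyz]

end

section
variable {E : Type*} [NormedAddCommGroup E] [InnerProductSpace ℝ E] {γ γ' : ℝ → E} {c : ℝ}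

theorem hasDerivAt_sq_norm_mul_exp {v : E} {s : ℝ} (hγ : HasDerivAt γ v s) (c : ℝ) :
    HasDerivAt (fun u => (‖γ u‖ * exp (-c * u)) ^ 2)
      (2 * exp (-c * s) ^ 2 * (⟪γ s, v⟫ - c * ‖γ s‖ ^ 2)) s := by
  have hexp : ∀ u, exp (-c * u) ^ 2 = exp (-(2 * c) * u) := fun u => by
    rw [← exp_nat_mul]; ring_nf
  have hd := (((hasDerivAt_id s).const_mul (-(2 * c))).exp).mul hγ.norm_sq
  simp only [id_eq, mul_one] at hd
  simp only [mul_pow, hexp, mul_comm _ (exp _)]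
  exact hd.congr_deriv (by ring)

theorem antitone_norm_mul_exp (hγ : ∀ s, HasDerivAt γ (γ' s) s)
    (h : ∀ s, ⟪γ s, γ' s⟫ ≤ c * ‖γ s‖ ^ 2) :
    Antitone fun s => ‖γ s‖ * exp (-c * s) := by
  have hsq : Antitone fun s => (‖γ s‖ * exp (-c * s)) ^ 2 :=
    antitone_of_deriv_nonpos (fun s => (hasDerivAt_sq_norm_mul_exp (hγ s) c).differentiableAt)
      fun s => (hasDerivAt_sq_norm_mul_exp (hγ s) c).deriv ▸
        mul_nonpos_of_nonneg_of_nonpos (by positivity) (sub_nonpos.2 (h s))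
  exact fun s t hst => le_of_sq_le_sq (hsq hst) (by positivity)

theorem monotone_norm_mul_exp (hγ : ∀ s, HasDerivAt γ (γ' s) s)
    (h : ∀ s, c * ‖γ s‖ ^ 2 ≤ ⟪γ s, γ' s⟫) :
    Monotone fun s => ‖γ s‖ * exp (-c * s) := by
  have hsq : Monotone fun s => (‖γ s‖ * exp (-c * s)) ^ 2 :=
    monotone_of_deriv_nonneg (fun s => (hasDerivAt_sq_norm_mul_exp (hγ s) c).differentiableAt)
      fun s => (hasDerivAt_sq_norm_mul_exp (hγ s) c).deriv ▸
        mul_nonneg (by positivity) (sub_nonneg.2 (h s))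
  exact fun s t hst => le_of_sq_le_sq (hsq hst) (by positivity)

theorem norm_exp_bounds_of_inner_bounds {c₁ c₂ : ℝ} (hγ : ∀ s, HasDerivAt γ (γ' s) s)
    (h : ∀ s, c₁ * ‖γ s‖ ^ 2 ≤ ⟪γ s, γ' s⟫ ∧ ⟪γ s, γ' s⟫ ≤ c₂ * ‖γ s‖ ^ 2) {t : ℝ} (ht : 0 ≤ t) :
    (‖γ 0‖ * exp (c₁ * t) ≤ ‖γ t‖ ∧ ‖γ t‖ ≤ ‖γ 0‖ * exp (c₂ * t)) ∧
      (‖γ 0‖ * exp (-c₂ * t) ≤ ‖γ (-t)‖ ∧ ‖γ (-t)‖ ≤ ‖γ 0‖ * exp (-c₁ * t)) := by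
  have hmono := monotone_norm_mul_exp hγ fun s => (h s).1
  have hanti := antitone_norm_mul_exp hγ fun s => (h s).2
  have h₁ := hmono ht
  have h₂ := hanti ht
  have h₃ := hanti (neg_nonpos.2 ht)
  have h₄ := hmono (neg_nonpos.2 ht)
  simp only [mul_zero, exp_zero, mul_one, neg_mul, mul_neg, neg_neg, exp_neg] at h₁ h₂ h₃ h₄ ⊢
  refine ⟨⟨?_, ?_⟩, ?_, ?_⟩
  · exact (le_mul_inv_iff₀ (exp_pos _)).1 h₁
  · exact (mul_inv_le_iff₀ (exp_pos _)).1 h₂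
  · exact (mul_inv_le_iff₀ (exp_pos _)).2 h₃
  · exact (le_mul_inv_iff₀ (exp_pos _)).2 h₄

end

theorem stmt_2_general (n : ℕ) (a b : ℝ)
    (α : Fin n → ℝ) (hα : ∀ i, a ≤ α i ∧ α i ≤ b)
    (m : ℕ) (c₀' c₀'' : ℝ) (hc₀' : 0 < c₀')
    (Z₁ : EuclideanSpace ℝ (Fin n) → EuclideanSpace ℝ (Fin n))
    (hZ₁ : ∀ x : EuclideanSpace ℝ (Fin n), ‖x‖ ≤ 1 → ‖Z₁ x‖ ≤ c₀' * ‖x‖ ^ (1 + m))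
    (hZ₂ : ∀ x : EuclideanSpace ℝ (Fin n), 1 ≤ ‖x‖ → ‖Z₁ x‖ ≤ c₀'' * ‖x‖)
    (c₀ a₀ b₀ : ℝ) (hc₀ : c₀ = max c₀' c₀'') (ha₀ : a₀ = a - c₀) (hb₀ : b₀ = b + c₀)
    (Y₁ : EuclideanSpace ℝ (Fin n) → EuclideanSpace ℝ (Fin n))
    (hY₁ : ∀ x i, Y₁ x i = α i * x i + Z₁ x i)
    (ψ : ℝ → EuclideanSpace ℝ (Fin n) → EuclideanSpace ℝ (Fin n))
    (hψ0 : ∀ x, ψ 0 x = x)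
    (hψ : ∀ t : ℝ, ∀ x, HasDerivAt (fun s => ψ s x) (Y₁ (ψ t x)) t) :
    ∀ x : EuclideanSpace ℝ (Fin n), ∀ t ≥ (0:ℝ),
      (‖x‖ * Real.exp (a₀ * t) ≤ ‖ψ t x‖ ∧ ‖ψ t x‖ ≤ ‖x‖ * Real.exp (b₀ * t)) ∧
      (‖x‖ * Real.exp (-b₀ * t) ≤ ‖ψ (-t) x‖ ∧ ‖ψ (-t) x‖ ≤ ‖x‖ * Real.exp (-a₀ * t)) := by
  intro x t ht
  have hZ : ∀ y, ‖Z₁ y‖ ≤ c₀ * ‖y‖ := hc₀ ▸ norm_le_max_mul_norm hc₀'.le hZ₁ hZ₂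
  have hY : ∀ y, a₀ * ‖y‖ ^ 2 ≤ ⟪y, Y₁ y⟫ ∧ ⟪y, Y₁ y⟫ ≤ b₀ * ‖y‖ ^ 2 := fun y =>
    ha₀ ▸ hb₀ ▸ EuclideanSpace.inner_bounds_of_diagonal_add hα (hY₁ y) (hZ y)
  simpa only [hψ0] using
    norm_exp_bounds_of_inner_bounds (γ := fun s => ψ s x) (fun s => hψ s x) (fun s => hY (ψ s x)) ht

/-- Two-sided exponential estimates for the flow (defined for all
`t ∈ ℝ`) of `Y₁(x)ᵢ = αᵢ xᵢ + Z₁(x)ᵢ` under superlinear smallness of `Z₁` near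
the origin and linear growth bounds away from it. -/
theorem stmt_2 (n : ℕ) (hn : 1 ≤ n) (a b : ℝ) (hab : a ≤ b)
    (α : Fin n → ℝ) (hα : ∀ i, a ≤ α i ∧ α i ≤ b)
    (m : ℕ) (hm : 1 ≤ m) (c₀' c₀'' : ℝ) (hc₀' : 0 < c₀') (hc₀'' : 0 < c₀'')
    (Z₁ : EuclideanSpace ℝ (Fin n) → EuclideanSpace ℝ (Fin n))
    (hZcont : Continuous Z₁)
    (hZ₁ : ∀ x : EuclideanSpace ℝ (Fin n), ‖x‖ ≤ 1 → ‖Z₁ x‖ ≤ c₀' * ‖x‖ ^ (1 + m))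
    (hZ₂ : ∀ x : EuclideanSpace ℝ (Fin n), 1 ≤ ‖x‖ → ‖Z₁ x‖ ≤ c₀'' * ‖x‖)
    (c₀ a₀ b₀ : ℝ) (hc₀ : c₀ = max c₀' c₀'') (ha₀ : a₀ = a - c₀) (hb₀ : b₀ = b + c₀)
    (Y₁ : EuclideanSpace ℝ (Fin n) → EuclideanSpace ℝ (Fin n))
    (hY₁ : ∀ x i, Y₁ x i = α i * x i + Z₁ x i)
    (ψ : ℝ → EuclideanSpace ℝ (Fin n) → EuclideanSpace ℝ (Fin n))
    (hψ0 : ∀ x, ψ 0 x = x)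
    (hψ : ∀ t : ℝ, ∀ x, HasDerivAt (fun s => ψ s x) (Y₁ (ψ t x)) t) :
    ∀ x : EuclideanSpace ℝ (Fin n), ∀ t ≥ (0:ℝ),
      (‖x‖ * Real.exp (a₀ * t) ≤ ‖ψ t x‖ ∧ ‖ψ t x‖ ≤ ‖x‖ * Real.exp (b₀ * t)) ∧
      (‖x‖ * Real.exp (-b₀ * t) ≤ ‖ψ (-t) x‖ ∧ ‖ψ (-t) x‖ ≤ ‖x‖ * Real.exp (-a₀ * t)) :=
  stmt_2_general n a b α hα m c₀' c₀'' hc₀' Z₁ hZ₁ hZ₂ c₀ a₀ b₀ hc₀ ha₀ hb₀ Y₁ hY₁ ψ hψ0 hψ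
end

section
/- Let a ≤ b be reals, α : Fin n → ℝ with a ≤ αᵢ ≤ b for all i, and let Z₁ : ℝⁿ → ℝⁿ be differentiable satisfying, for some integer m ≥ 1 and constants c_l′, c_l″ > 0 (l = 0, 1): ‖D^l Z₁(x)‖ ≤ c_l′‖x‖^{1−l+m} for all x with ‖x‖ ≤ 1, and ‖D^l Z₁(x)‖ ≤ c_l″‖x‖^{1−l} for all x with ‖x‖ ≥ 1 (here D⁰Z₁ = Z₁ and D¹Z₁ = DZ₁ with operator norm). Set c₁ = max(c₁′, c₁″), a₁ = a − c₁, b₁ = b + c₁. Let Y₁(x)ᵢ = αᵢ xᵢ + Z₁(x)ᵢ, let ψ be a forward flow of Y₁, and let η be a first variation of ψ at x ∈ ℝⁿ with initial vector ν ∈ ℝⁿ. Then for all t ≥ 0: ‖ν‖e^{a₁ t} ≤ ‖η t‖ ≤ ‖ν‖e^{b₁ t}. -/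
open Real Set
open scoped RealInnerProductSpace

/-!
The derivative of `Y₁` is the diagonal map `diag α` plus `DZ₁`, and `‖DZ₁‖ ≤ c₁` everywhere, so
`a₁ ‖v‖² ≤ ⟪v, DY₁(y) v⟫ ≤ b₁ ‖v‖²` for all `y, v`. Hence `‖η‖²` has derivative `2⟪η, DY₁ η⟫`
trapped between `2a₁ ‖η‖²` and `2b₁ ‖η‖²`, and Grönwall's inequality on `[0, t]` (applied to
`‖η‖²` and to `-‖η‖²`) gives both exponential bounds.
-/

section Gronwall

variable {g g' : ℝ → ℝ} {c t : ℝ}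

theorem le_mul_exp_of_hasDerivAt_le (hg : ∀ s ≥ 0, HasDerivAt g (g' s) s)
    (bound : ∀ s ≥ 0, g' s ≤ c * g s) (ht : 0 ≤ t) : g t ≤ g 0 * exp (c * t) := by
  have hcont : ContinuousOn g (Icc 0 t) := fun s hs => (hg s hs.1).continuousAt.continuousWithinAt
  simpa [gronwallBound_ε0] using
    le_gronwallBound_of_liminf_deriv_right_le (K := c) (ε := 0) hcont
      (fun s hs _ hr => (hg s hs.1).hasDerivWithinAt.liminf_right_slope_le hr) le_rfl
      (fun s hs => by simpa using bound s hs.1) t ⟨ht, le_rfl⟩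

theorem mul_exp_le_of_le_hasDerivAt (hg : ∀ s ≥ 0, HasDerivAt g (g' s) s)
    (bound : ∀ s ≥ 0, c * g s ≤ g' s) (ht : 0 ≤ t) : g 0 * exp (c * t) ≤ g t := by
  have := le_mul_exp_of_hasDerivAt_le (g := -g) (g' := -g') (fun s hs => (hg s hs).neg)
    (fun s hs => by simpa using bound s hs) ht
  simpa using this

end Gronwall

theorem mul_exp_sq (y c t : ℝ) : (y * exp (c * t)) ^ 2 = y ^ 2 * exp (2 * c * t) := by
  rw [mul_pow, ← exp_nat_mul]; ring_nf

section InnerDeriv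

variable {E : Type*} [NormedAddCommGroup E] [InnerProductSpace ℝ E] {η η' : ℝ → E} {c t : ℝ}

theorem norm_le_norm_mul_exp_of_inner_deriv_le (hη : ∀ s ≥ 0, HasDerivAt η (η' s) s)
    (bound : ∀ s ≥ 0, ⟪η s, η' s⟫ ≤ c * ‖η s‖ ^ 2) (ht : 0 ≤ t) :
    ‖η t‖ ≤ ‖η 0‖ * exp (c * t) := by
  have := le_mul_exp_of_hasDerivAt_le (c := 2 * c) (fun s hs => (hη s hs).norm_sq)
    (fun s hs => by linarith [bound s hs]) ht
  rw [← mul_exp_sq] at this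
  exact (pow_le_pow_iff_left₀ (norm_nonneg _) (by positivity) two_ne_zero).1 this

theorem norm_mul_exp_le_norm_of_le_inner_deriv (hη : ∀ s ≥ 0, HasDerivAt η (η' s) s)
    (bound : ∀ s ≥ 0, c * ‖η s‖ ^ 2 ≤ ⟪η s, η' s⟫) (ht : 0 ≤ t) :
    ‖η 0‖ * exp (c * t) ≤ ‖η t‖ := by
  have := mul_exp_le_of_le_hasDerivAt (c := 2 * c) (fun s hs => (hη s hs).norm_sq)
    (fun s hs => by linarith [bound s hs]) ht
  rw [← mul_exp_sq] at this
  exact (pow_le_pow_iff_left₀ (by positivity) (norm_nonneg _) two_ne_zero).1 this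

theorem abs_inner_apply_self_le (B : E →L[ℝ] E) (v : E) : |⟪v, B v⟫| ≤ ‖B‖ * ‖v‖ ^ 2 :=
  calc |⟪v, B v⟫| ≤ ‖v‖ * ‖B v‖ := abs_real_inner_le_norm _ _
    _ ≤ ‖v‖ * (‖B‖ * ‖v‖) := by gcongr; exact B.le_opNorm v
    _ = ‖B‖ * ‖v‖ ^ 2 := by ring

theorem sub_mul_norm_sq_le_inner_add_apply_self {A B : E →L[ℝ] E} {a c : ℝ} {v : E}
    (hA : a * ‖v‖ ^ 2 ≤ ⟪v, A v⟫) (hB : ‖B‖ ≤ c) : (a - c) * ‖v‖ ^ 2 ≤ ⟪v, (A + B) v⟫ := by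
  have hBv := neg_le_of_abs_le (abs_inner_apply_self_le B v)
  have := mul_le_mul_of_nonneg_right hB (sq_nonneg ‖v‖)
  rw [add_apply, inner_add_right]
  linarith

theorem inner_add_apply_self_le_add_mul_norm_sq {A B : E →L[ℝ] E} {b c : ℝ} {v : E}
    (hA : ⟪v, A v⟫ ≤ b * ‖v‖ ^ 2) (hB : ‖B‖ ≤ c) : ⟪v, (A + B) v⟫ ≤ (b + c) * ‖v‖ ^ 2 := by
  have hBv := le_of_abs_le (abs_inner_apply_self_le B v)
  have := mul_le_mul_of_nonneg_right hB (sq_nonneg ‖v‖)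
  rw [add_apply, inner_add_right]
  linarith

end InnerDeriv

section Diagonal

open Matrix

variable {ι : Type*} [Fintype ι] [DecidableEq ι] {α : ι → ℝ}

theorem inner_toEuclideanCLM_diagonal_self (v : EuclideanSpace ℝ ι) :
    ⟪v, toEuclideanCLM (𝕜 := ℝ) (diagonal α) v⟫ = ∑ i, α i * v i ^ 2 := by
  rw [inner_toEuclideanCLM]
  simp only [dotProduct, mulVec_diagonal]
  exact Finset.sum_congr rfl fun i _ => by ring

theorem mul_norm_sq_le_inner_toEuclideanCLM_diagonal {a : ℝ} (hα : ∀ i, a ≤ α i)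
    (v : EuclideanSpace ℝ ι) : a * ‖v‖ ^ 2 ≤ ⟪v, toEuclideanCLM (𝕜 := ℝ) (diagonal α) v⟫ := by
  rw [inner_toEuclideanCLM_diagonal_self, EuclideanSpace.norm_sq_eq, Finset.mul_sum]
  exact Finset.sum_le_sum fun i _ => by
    simpa using mul_le_mul_of_nonneg_right (hα i) (sq_nonneg (v i))

theorem inner_toEuclideanCLM_diagonal_le_mul_norm_sq {b : ℝ} (hα : ∀ i, α i ≤ b)
    (v : EuclideanSpace ℝ ι) : ⟪v, toEuclideanCLM (𝕜 := ℝ) (diagonal α) v⟫ ≤ b * ‖v‖ ^ 2 := by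
  rw [inner_toEuclideanCLM_diagonal_self, EuclideanSpace.norm_sq_eq, Finset.mul_sum]
  exact Finset.sum_le_sum fun i _ => by
    simpa using mul_le_mul_of_nonneg_right (hα i) (sq_nonneg (v i))

theorem fderiv_diagonal_add {Z Y : EuclideanSpace ℝ ι → EuclideanSpace ℝ ι}
    (hZ : Differentiable ℝ Z) (hY : ∀ x i, Y x i = α i * x i + Z x i) (x : EuclideanSpace ℝ ι) :
    fderiv ℝ Y x = toEuclideanCLM (𝕜 := ℝ) (diagonal α) + fderiv ℝ Z x := by
  have hY' : Y = fun y => toEuclideanCLM (𝕜 := ℝ) (diagonal α) y + Z y := by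
    funext y; ext i; simp [hY, mulVec_diagonal]
  rw [hY']
  exact ((toEuclideanCLM (𝕜 := ℝ) (diagonal α)).hasFDerivAt.add (hZ x).hasFDerivAt).fderiv

end Diagonal

theorem le_max_of_le_mul_norm_pow_of_le {E : Type*} [NormedAddCommGroup E] {f : E → ℝ}
    {c' c'' : ℝ} {m : ℕ} (hc' : 0 ≤ c') (hin : ∀ x, ‖x‖ ≤ 1 → f x ≤ c' * ‖x‖ ^ m)
    (hout : ∀ x, 1 ≤ ‖x‖ → f x ≤ c'') (x : E) : f x ≤ max c' c'' := by
  rcases le_total ‖x‖ 1 with h | h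
  · calc f x ≤ c' * ‖x‖ ^ m := hin x h
      _ ≤ c' * 1 := by gcongr; exact pow_le_one₀ (norm_nonneg x) h
      _ ≤ max c' c'' := by simp
  · exact (hout x h).trans (le_max_right _ _)

theorem stmt_6_general (n : ℕ) (a b : ℝ)
    (α : Fin n → ℝ) (hα : ∀ i, a ≤ α i ∧ α i ≤ b)
    (m : ℕ)
    (c₁' c₁'' : ℝ)
    (hc₁' : 0 < c₁')
    (Z₁ : EuclideanSpace ℝ (Fin n) → EuclideanSpace ℝ (Fin n))
    (hZdiff : Differentiable ℝ Z₁)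
    (hZ1in : ∀ x : EuclideanSpace ℝ (Fin n), ‖x‖ ≤ 1 → ‖fderiv ℝ Z₁ x‖ ≤ c₁' * ‖x‖ ^ m)
    (hZ1out : ∀ x : EuclideanSpace ℝ (Fin n), 1 ≤ ‖x‖ → ‖fderiv ℝ Z₁ x‖ ≤ c₁'')
    (c₁ a₁ b₁ : ℝ) (hc₁ : c₁ = max c₁' c₁'') (ha₁ : a₁ = a - c₁) (hb₁ : b₁ = b + c₁)
    (Y₁ : EuclideanSpace ℝ (Fin n) → EuclideanSpace ℝ (Fin n))
    (hY₁ : ∀ x i, Y₁ x i = α i * x i + Z₁ x i)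
    (ψ : ℝ → EuclideanSpace ℝ (Fin n) → EuclideanSpace ℝ (Fin n))
    (x ν : EuclideanSpace ℝ (Fin n))
    (η : ℝ → EuclideanSpace ℝ (Fin n))
    (hη0 : η 0 = ν)
    (hη : ∀ t ≥ (0:ℝ), HasDerivAt η (fderiv ℝ Y₁ (ψ t x) (η t)) t) :
    ∀ t ≥ (0:ℝ), ‖ν‖ * Real.exp (a₁ * t) ≤ ‖η t‖ ∧ ‖η t‖ ≤ ‖ν‖ * Real.exp (b₁ * t) := by
  intro t ht
  have hDZ (y) : ‖fderiv ℝ Z₁ y‖ ≤ c₁ :=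
    hc₁ ▸ le_max_of_le_mul_norm_pow_of_le hc₁'.le hZ1in hZ1out y
  subst hη0 ha₁ hb₁
  refine ⟨norm_mul_exp_le_norm_of_le_inner_deriv hη (fun s _ => ?_) ht,
    norm_le_norm_mul_exp_of_inner_deriv_le hη (fun s _ => ?_) ht⟩ <;>
    rw [fderiv_diagonal_add hZdiff hY₁]
  · exact sub_mul_norm_sq_le_inner_add_apply_self
      (mul_norm_sq_le_inner_toEuclideanCLM_diagonal (fun i => (hα i).1) _) (hDZ _)
  · exact inner_add_apply_self_le_add_mul_norm_sq
      (inner_toEuclideanCLM_diagonal_le_mul_norm_sq (fun i => (hα i).2) _) (hDZ _)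

/-- Exponential estimates for the first variation of the flow of
`Y₁(x)ᵢ = αᵢ xᵢ + Z₁(x)ᵢ` under power-type bounds on `Z₁` and `DZ₁`. -/
theorem stmt_6 (n : ℕ) (hn : 1 ≤ n) (a b : ℝ) (hab : a ≤ b)
    (α : Fin n → ℝ) (hα : ∀ i, a ≤ α i ∧ α i ≤ b)
    (m : ℕ) (hm : 1 ≤ m)
    (c₀' c₀'' c₁' c₁'' : ℝ) (hc₀' : 0 < c₀') (hc₀'' : 0 < c₀'')
    (hc₁' : 0 < c₁') (hc₁'' : 0 < c₁'')
    (Z₁ : EuclideanSpace ℝ (Fin n) → EuclideanSpace ℝ (Fin n))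
    (hZdiff : Differentiable ℝ Z₁)
    (hZ0in : ∀ x : EuclideanSpace ℝ (Fin n), ‖x‖ ≤ 1 → ‖Z₁ x‖ ≤ c₀' * ‖x‖ ^ (1 + m))
    (hZ0out : ∀ x : EuclideanSpace ℝ (Fin n), 1 ≤ ‖x‖ → ‖Z₁ x‖ ≤ c₀'' * ‖x‖)
    (hZ1in : ∀ x : EuclideanSpace ℝ (Fin n), ‖x‖ ≤ 1 → ‖fderiv ℝ Z₁ x‖ ≤ c₁' * ‖x‖ ^ m)
    (hZ1out : ∀ x : EuclideanSpace ℝ (Fin n), 1 ≤ ‖x‖ → ‖fderiv ℝ Z₁ x‖ ≤ c₁'')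
    (c₁ a₁ b₁ : ℝ) (hc₁ : c₁ = max c₁' c₁'') (ha₁ : a₁ = a - c₁) (hb₁ : b₁ = b + c₁)
    (Y₁ : EuclideanSpace ℝ (Fin n) → EuclideanSpace ℝ (Fin n))
    (hY₁ : ∀ x i, Y₁ x i = α i * x i + Z₁ x i)
    (ψ : ℝ → EuclideanSpace ℝ (Fin n) → EuclideanSpace ℝ (Fin n))
    (hψ0 : ∀ x, ψ 0 x = x)
    (hψ : ∀ t ≥ (0:ℝ), ∀ x, HasDerivAt (fun s => ψ s x) (Y₁ (ψ t x)) t)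
    (x ν : EuclideanSpace ℝ (Fin n))
    (η : ℝ → EuclideanSpace ℝ (Fin n))
    (hη0 : η 0 = ν)
    (hη : ∀ t ≥ (0:ℝ), HasDerivAt η (fderiv ℝ Y₁ (ψ t x) (η t)) t) :
    ∀ t ≥ (0:ℝ), ‖ν‖ * Real.exp (a₁ * t) ≤ ‖η t‖ ∧ ‖η t‖ ≤ ‖ν‖ * Real.exp (b₁ * t) :=
  stmt_6_general n a b α hα m c₁' c₁'' hc₁' Z₁ hZdiff hZ1in hZ1out c₁ a₁ b₁ hc₁ ha₁ hb₁ Y₁ hY₁ ψ x ν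
    η hη0 hη
end
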